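/- For integers p ≥ 1 and r ≥ 1, the generating function of the Raney numbers satisfies B_{p,r}(z) = B_p(z)^r as formal power series, where B_{p,r}(z) = ∑_{n≥0} A_n(p,r) z^n and B_p = B_{p,1}. -/
import Mathlib


/-- The Fuss-Catalan (Raney) numbers `A_n(p,r)` as rationals. -/
noncomputable def raney (p r n : ℕ) : ℚ :=
  if n = 0 then 1 else (r : ℚ) / (p * n + r) * ((p * n + r).choose n : ℚ)

lemma raney_zero_left (p n : ℕ) : raney p 0 n = if n = 0 then 1 else 0 := by
  rcases Nat.eq_zero_or_pos n with h | h
  · simp [raney, h]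
  · simp [raney, Nat.pos_iff_ne_zero.mp h]

lemma raney_eq (p r n : ℕ) (hr : 1 ≤ r) :
    raney p r n = (r : ℚ) / (p * n + r) * ((p * n + r).choose n : ℚ) := by
  rcases Nat.eq_zero_or_pos n with h | h
  · subst h
    have hr' : (r : ℚ) ≠ 0 := by
      exact_mod_cast Nat.pos_iff_ne_zero.mp hr
    simp [raney, div_self hr']
  · simp [raney, Nat.pos_iff_ne_zero.mp h]

lemma raney_rec (p r k : ℕ) (hp : 1 ≤ p) :
    raney p (r + 1) (k + 1) = raney p r (k + 1) + raney p (p + r) k := by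
  have e2 : raney p (r + 1) (k + 1)
      = ((r : ℚ) + 1) / ((p : ℚ) * (k + 1) + r + 1)
        * (((p * (k + 1) + r + 1).choose (k + 1) : ℚ)) := by
    rw [raney_eq p (r + 1) (k + 1) (by omega)]
    have h : p * (k + 1) + (r + 1) = p * (k + 1) + r + 1 := by ring
    rw [h]; push_cast; ring
  have e1 : raney p r (k + 1)
      = (r : ℚ) / ((p : ℚ) * (k + 1) + r)
        * (((p * (k + 1) + r).choose (k + 1) : ℚ)) := by
    simp [raney]
  have e3 : raney p (p + r) k
      = ((p : ℚ) + r) / ((p : ℚ) * (k + 1) + r)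
        * (((p * (k + 1) + r).choose k : ℚ)) := by
    rw [raney_eq p (p + r) k (by omega)]
    have h : p * k + (p + r) = p * (k + 1) + r := by ring
    rw [h]; push_cast; ring
  rw [e1, e2, e3]
  have hkN : k ≤ p * (k + 1) + r := by
    have := Nat.mul_le_mul_right (k + 1) hp
    omega
  have pascal : (((p * (k + 1) + r + 1).choose (k + 1) : ℚ))
      = ((p * (k + 1) + r).choose k : ℚ) + ((p * (k + 1) + r).choose (k + 1) : ℚ) := by
    exact_mod_cast Nat.choose_succ_succ (p * (k + 1) + r) k
  have hsucc : ((p * (k + 1) + r).choose (k + 1) : ℚ) * ((k : ℚ) + 1)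
      = ((p * (k + 1) + r).choose k : ℚ) * ((p : ℚ) * (k + 1) + r - k) := by
    have h := Nat.choose_succ_right_eq (p * (k + 1) + r) k
    have h' : ((p * (k + 1) + r).choose (k + 1) * (k + 1) : ℚ)
        = ((p * (k + 1) + r).choose k : ℚ) * (((p * (k + 1) + r - k : ℕ) : ℚ)) := by
      exact_mod_cast h
    rw [Nat.cast_sub hkN] at h'
    push_cast at h' ⊢
    linarith [h']
  have hN : ((p : ℚ) * (k + 1) + r) ≠ 0 := by positivity
  have hN1 : ((p : ℚ) * (k + 1) + r + 1) ≠ 0 := by positivity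
  rw [pascal]
  field_simp
  ring_nf
  ring_nf at hsucc
  nlinarith [hsucc]

lemma raney_conv (p : ℕ) (hp : 1 ≤ p) :
    ∀ n r, ∑ k ∈ Finset.range (n + 1), raney p 1 k * raney p r (n - k)
      = raney p (r + 1) n := by
  intro n
  induction n using Nat.strong_induction_on with
  | _ n ih =>
    intro r
    induction r with
    | zero =>
      rw [Finset.sum_eq_single n]
      · simp [raney_zero_left]
      · intro k hk hkn
        have : n - k ≠ 0 := by
          simp only [Finset.mem_range] at hk; omega
        simp [raney_zero_left, this]
      · intro h
        simp at h
    | succ r ihr =>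
      rcases n with _ | m
      · simp [raney]
      · have expand : ∀ k ∈ Finset.range (m + 1),
            raney p 1 k * raney p (r + 1) (m + 1 - k)
            = raney p 1 k * raney p r (m + 1 - k) + raney p 1 k * raney p (p + r) (m - k) := by
          intro k hk
          simp only [Finset.mem_range] at hk
          have h1 : m + 1 - k = (m - k) + 1 := by omega
          rw [h1, raney_rec p r (m - k) hp]
          ring
        rw [Finset.sum_range_succ, Finset.sum_congr rfl expand, Finset.sum_add_distrib]
        rw [Finset.sum_range_succ] at ihr
        have ih2 := ih m (by omega) (p + r)
        have hrec := raney_rec p (r + 1) m hp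
        have h0 : raney p (r + 1) 0 = 1 := by simp [raney]
        have h0' : raney p r 0 = 1 := by simp [raney]
        have hadd : p + (r + 1) = (p + r) + 1 := by omega
        rw [hadd] at hrec
        simp only [Nat.sub_self] at ihr ⊢
        rw [h0]
        rw [h0'] at ihr
        rw [ih2]
        linarith [ihr, hrec]

lemma mk_raney_pow (p : ℕ) (hp : 1 ≤ p) :
    ∀ r, PowerSeries.mk (fun n => raney p r n) = (PowerSeries.mk (fun n => raney p 1 n)) ^ r := by
  intro r
  induction r with
  | zero =>
    ext n
    simp [raney_zero_left, PowerSeries.coeff_one]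
  | succ r ihr =>
    rw [pow_succ', ← ihr]
    ext n
    rw [PowerSeries.coeff_mul, Finset.Nat.sum_antidiagonal_eq_sum_range_succ_mk]
    simp only [PowerSeries.coeff_mk]
    exact (raney_conv p hp n r).symm

theorem stmt_10 (p r : ℕ) (hp : 1 ≤ p) (hr : 1 ≤ r) :
    PowerSeries.mk (fun n => raney p r n) =
      (PowerSeries.mk (fun n => raney p 1 n)) ^ r :=
  mk_raney_pow p hp r
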